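/- Let A ⊆ ℝⁿ be nonempty and closed, and let r : bdry A → (0, +∞) be continuous. If A satisfies the extended exterior r(·)-sphere condition and ρ(x) := min{ r(a)/2 : a ∈ proj_A(x) } for x ∈ Aᶜ, then for every x ∈ Aᶜ there exists y_x ∈ Aᶜ with x ∈ B̄(y_x; ρ(x)) ⊆ Aᶜ; i.e., Aᶜ is the union of closed balls with radius function ρ(·). -/

import Mathlib

/-!
Let `b` be a nearest point of `A` to `x`. Then `B(x, |x - b|)` is an exterior ball at `b`, and
the sphere condition gives a second one, `B(b + c, |c|)` with `|c| = r(b) ≥ 2ρ(x)` and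
`⟪c, x - b⟫ ≥ 0`. If `x - b` is a proximal normal, take `c` in its direction; otherwise `c` is a
limit of exterior normals at points where segments from interior points near `b` to `x` leave
`int A`, using continuity of `r`. The condition `B(b + c, |c|) ∩ A = ∅` reads
`2⟪c, w - b⟫ ≤ |w - b|²` for `w ∈ A`, so it is convex in `c`; normals on the segment from
`x - b` to `c` just short of its midpoint give an exterior ball of radius `> ρ(x)` containing `x`
in its interior, and it contains a closed `ρ(x)`-ball through `x`.
-/

open Metric Set

/-- The set of closest points of `A` to `x`. -/
def projSet {n : ℕ} (A : Set (EuclideanSpace ℝ (Fin n)))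
    (x : EuclideanSpace ℝ (Fin n)) : Set (EuclideanSpace ℝ (Fin n)) :=
  {a ∈ A | dist x a = Metric.infDist x A}

/-- The proximal normal cone to `A` at `a`. -/
def proxNormalCone {n : ℕ} (A : Set (EuclideanSpace ℝ (Fin n)))
    (a : EuclideanSpace ℝ (Fin n)) : Set (EuclideanSpace ℝ (Fin n)) :=
  {ζ | ∃ σ : ℝ, 0 ≤ σ ∧ ∀ y ∈ A, (inner ℝ ζ (y - a) : ℝ) ≤ σ * ‖y - a‖ ^ 2}

/-- `A` satisfies the extended exterior `r(·)`-sphere condition (finite radii). -/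
def ExtExtSphere {n : ℕ} (A : Set (EuclideanSpace ℝ (Fin n)))
    (r : EuclideanSpace ℝ (Fin n) → ℝ) : Prop :=
  ∀ a ∈ frontier A,
    (a ∈ frontier (interior A) →
      ∃ ζ, ‖ζ‖ = 1 ∧ ζ ∈ proxNormalCone A a ∧
        Metric.ball (a + r a • ζ) (r a) ∩ A = ∅) ∧
    (a ∉ frontier (interior A) →
      ∀ ζ, ‖ζ‖ = 1 → ζ ∈ proxNormalCone A a →
        Metric.ball (a + r a • ζ) (r a) ∩ A = ∅)

open Filter Topology
open scoped RealInnerProductSpace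

theorem IsPreconnected.exists_mem_frontier_of_isOpen {X : Type*} [TopologicalSpace X]
    {s u : Set X} (hs : IsPreconnected s) (hu : IsOpen u) (hsu : (s ∩ u).Nonempty)
    (hsu' : ¬ s ⊆ u) : ∃ q ∈ s, q ∈ frontier u := by
  by_contra! h
  refine hsu' (hs.subset_of_closure_inter_subset hu hsu fun q ⟨hqu, hqs⟩ => ?_)
  by_contra hq
  exact h q hqs ⟨hqu, by rwa [hu.interior_eq]⟩

theorem disjoint_ball_of_tendsto {X ι : Type*} [PseudoMetricSpace X] {l : Filter ι}
    [l.NeBot] {A : Set X} {z : ι → X} {R : ι → ℝ} {z₀ : X} {R₀ : ℝ} (hz : Tendsto z l (𝓝 z₀))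
    (hR : Tendsto R l (𝓝 R₀)) (h : ∀ i, Disjoint (ball (z i) (R i)) A) :
    Disjoint (ball z₀ R₀) A := by
  refine Set.disjoint_right.2 fun w hw hwz => (mem_ball.1 hwz).not_ge ?_
  refine le_of_tendsto_of_tendsto' hR (tendsto_const_nhds.dist hz) fun i => ?_
  exact not_lt.1 fun hlt => (h i).notMem_of_mem_right hw (mem_ball.2 hlt)

section InnerProductSpace

variable {V : Type*} [NormedAddCommGroup V] [InnerProductSpace ℝ V]

theorem mem_ball_add_norm_iff {b c w : V} :
    w ∈ ball (b + c) ‖c‖ ↔ ‖w - b‖ ^ 2 < 2 * ⟪c, w - b⟫ := by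
  rw [mem_ball, dist_eq_norm, sub_add_eq_sub_sub, ← sq_lt_sq₀ (norm_nonneg _) (norm_nonneg _),
    norm_sub_sq_real, real_inner_comm]
  constructor <;> intro h <;> linarith

theorem disjoint_ball_add_norm_iff {A : Set V} {b c : V} :
    Disjoint (ball (b + c) ‖c‖) A ↔ ∀ w ∈ A, 2 * ⟪c, w - b⟫ ≤ ‖w - b‖ ^ 2 := by
  simp only [Set.disjoint_right, mem_ball_add_norm_iff, not_lt]

theorem convex_setOf_disjoint_ball_add_norm (A : Set V) (b : V) :
    Convex ℝ {c : V | Disjoint (ball (b + c) ‖c‖) A} := by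
  intro c₁ h₁ c₂ h₂ s t hs ht hst
  simp only [mem_ofPred_eq, disjoint_ball_add_norm_iff] at h₁ h₂ ⊢
  intro w hw
  rw [inner_add_left, real_inner_smul_left, real_inner_smul_left]
  nlinarith [mul_le_mul_of_nonneg_left (h₁ w hw) hs, mul_le_mul_of_nonneg_left (h₂ w hw) ht]

theorem neg_mul_le_inner_of_mem_segment {p q x c : V} (hpq : p ≠ q) (hq : q ∈ segment ℝ p x)
    (hp : p ∉ ball (q + c) ‖c‖) : -(‖p - q‖ * ‖x - p‖) ≤ 2 * ⟪c, x - p⟫ := by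
  obtain ⟨τ, ⟨hτ0, -⟩, rfl⟩ := (segment_eq_image' ℝ p x).subset hq
  have hτ : 0 < τ := hτ0.lt_of_ne' fun h => hpq (by simp [h])
  have hpq' : p - (p + τ • (x - p)) = -(τ • (x - p)) := by abel
  rw [mem_ball_add_norm_iff, not_lt, hpq', inner_neg_right, real_inner_smul_right, norm_neg,
    norm_smul, Real.norm_of_nonneg hτ0] at hp
  rw [hpq', norm_neg, norm_smul, Real.norm_of_nonneg hτ0]
  nlinarith

/-- The normal `c t = (1 - t) • c₁ + t • c₂` with `t` slightly below `1 / 2` gives an exterior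
ball of radius `> ρ` that still has `b + c₁` in its interior. -/
theorem exists_closedBall_of_disjoint_balls {A : Set V} {b c₁ c₂ : V} {ρ : ℝ} (hc₁ : c₁ ≠ 0)
    (hinner : 0 ≤ ⟪c₁, c₂⟫) (hρ : 0 ≤ ρ) (hρc₂ : 2 * ρ ≤ ‖c₂‖)
    (h₁ : Disjoint (ball (b + c₁) ‖c₁‖) A) (h₂ : Disjoint (ball (b + c₂) ‖c₂‖) A) :
    ∃ y, b + c₁ ∈ closedBall y ρ ∧ Disjoint (closedBall y ρ) A := by
  set c : ℝ → V := fun t => (1 - t) • c₁ + t • c₂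
  have hcont : Continuous c := by fun_prop
  have hmid : ρ < ‖c (1 / 2)‖ := by
    have hsq : (2 * ρ) ^ 2 < ‖c₁ + c₂‖ ^ 2 := by
      rw [norm_add_sq_real]
      nlinarith [norm_pos_iff.2 hc₁]
    have h2 : c (1 / 2) = (1 / 2 : ℝ) • (c₁ + c₂) := by
      simp only [c, smul_add]; norm_num
    rw [h2, norm_smul, Real.norm_of_nonneg (by norm_num)]
    linarith [lt_of_pow_lt_pow_left₀ 2 (norm_nonneg _) hsq]
  have hev : ∀ᶠ t in 𝓝[<] (1 / 2 : ℝ), (ρ < ‖c t‖ ∧ 0 < t) ∧ t < 1 / 2 :=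
    ((((hcont.norm.tendsto _).eventually_const_lt hmid).and
      (Ioi_mem_nhds one_half_pos)).filter_mono nhdsWithin_le_nhds).and self_mem_nhdsWithin
  obtain ⟨t, ⟨hρt, ht0⟩, ht⟩ := hev.exists
  have hct : Disjoint (ball (b + c t) ‖c t‖) A :=
    convex_setOf_disjoint_ball_add_norm A b h₁ h₂ (by linarith) ht0.le (by ring)
  have hx : dist (b + c₁) (b + c t) < (‖c t‖ - ρ) + ρ := by
    rw [sub_add_cancel, ← mem_ball, mem_ball_add_norm_iff, add_sub_cancel_left, inner_add_left,
      real_inner_smul_left, real_inner_smul_left, real_inner_self_eq_norm_sq, real_inner_comm]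
    nlinarith [mul_pos (by linarith : 0 < 1 - 2 * t) (pow_pos (norm_pos_iff.2 hc₁) 2),
      mul_nonneg ht0.le hinner]
  obtain ⟨y, hxy, hyc⟩ := exists_dist_le_lt hρ (by linarith) hx
  exact ⟨y, mem_closedBall.2 hxy, hct.mono_left (closedBall_subset_ball' (by linarith))⟩

theorem exists_disjoint_ball_of_tendsto [ProperSpace V] {A : Set V} {x b : V} {R : ℝ}
    (hR : 0 ≤ R) {p q ξ : ℕ → V} {Rs : ℕ → ℝ} (hp : Tendsto p atTop (𝓝 b))
    (hq : Tendsto q atTop (𝓝 b)) (hRs : Tendsto Rs atTop (𝓝 R)) (hξ : ∀ k, ‖ξ k‖ = 1)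
    (hdisj : ∀ k, Disjoint (ball (q k + Rs k • ξ k) (Rs k)) A)
    (hineq : ∀ k, -(‖p k - q k‖ * ‖x - p k‖) ≤ 2 * ⟪Rs k • ξ k, x - p k⟫) :
    ∃ c, ‖c‖ = R ∧ 0 ≤ ⟪c, x - b⟫ ∧ Disjoint (ball (b + c) ‖c‖) A := by
  obtain ⟨Ξ, hΞ, φ, hφ, hξφ⟩ := (isCompact_sphere (0 : V) 1).tendsto_subseq fun k =>
    mem_sphere_zero_iff_norm.2 (hξ k)
  have hpφ := hp.comp hφ.tendsto_atTop
  have hqφ := hq.comp hφ.tendsto_atTop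
  have hRφ := hRs.comp hφ.tendsto_atTop
  have hc : Tendsto (fun k => Rs (φ k) • ξ (φ k)) atTop (𝓝 (R • Ξ)) := hRφ.smul hξφ
  have hnorm : ‖R • Ξ‖ = R := by
    rw [norm_smul, mem_sphere_zero_iff_norm.1 hΞ, Real.norm_of_nonneg hR, mul_one]
  refine ⟨R • Ξ, hnorm, ?_, ?_⟩
  · have hlhs :
        Tendsto (fun k => -(‖p (φ k) - q (φ k)‖ * ‖x - p (φ k)‖)) atTop (𝓝 0) := by
      simpa using ((hpφ.sub hqφ).norm.mul (tendsto_const_nhds.sub hpφ).norm).neg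
    have hlim := le_of_tendsto_of_tendsto' hlhs
      ((hc.inner (tendsto_const_nhds.sub hpφ)).const_mul 2) fun k => hineq (φ k)
    linarith
  · rw [hnorm]
    exact disjoint_ball_of_tendsto (hqφ.add hc) hRφ fun k => hdisj (φ k)

end InnerProductSpace

section EuclideanSpace

variable {n : ℕ} {A : Set (EuclideanSpace ℝ (Fin n))} {x b : EuclideanSpace ℝ (Fin n)}

theorem projSet_subset_frontier (hA : IsClosed A) (hx : x ∉ A) : projSet A x ⊆ frontier A := by
  rintro a ⟨haA, hax⟩
  have hpos : 0 < infDist x A := (hA.notMem_iff_infDist_pos ⟨a, haA⟩).1 hx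
  have ha : a ∈ closure (ball x (infDist x A)) := by
    rw [closure_ball x hpos.ne']
    exact mem_closedBall'.2 hax.le
  have hac := closure_mono disjoint_ball_infDist.subset_compl_right ha
  rw [closure_compl] at hac
  exact ⟨subset_closure haA, hac⟩

theorem smul_mem_proxNormalCone {a ζ : EuclideanSpace ℝ (Fin n)} {t : ℝ} (ht : 0 ≤ t)
    (hζ : ζ ∈ proxNormalCone A a) : t • ζ ∈ proxNormalCone A a := by
  obtain ⟨σ, hσ, h⟩ := hζ
  refine ⟨t * σ, mul_nonneg ht hσ, fun y hy => ?_⟩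
  rw [real_inner_smul_left, mul_assoc]
  exact mul_le_mul_of_nonneg_left (h y hy) ht

theorem mem_proxNormalCone_of_disjoint_ball {a c : EuclideanSpace ℝ (Fin n)}
    (h : Disjoint (ball (a + c) ‖c‖) A) : c ∈ proxNormalCone A a :=
  ⟨1 / 2, by norm_num, fun y hy => by linarith [disjoint_ball_add_norm_iff.1 h y hy]⟩

theorem disjoint_ball_sub_of_mem_projSet (hb : b ∈ projSet A x) :
    Disjoint (ball (b + (x - b)) ‖x - b‖) A := by
  rw [add_sub_cancel, ← dist_eq_norm, hb.2]
  exact disjoint_ball_infDist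

variable {r : EuclideanSpace ℝ (Fin n) → ℝ}

theorem exists_disjoint_ball_of_notMem_frontier_interior (hext : ExtExtSphere A r)
    (hrb : 0 ≤ r b) (hx : x ∉ A) (hb : b ∈ projSet A x) (hbA : b ∈ frontier A)
    (hbi : b ∉ frontier (interior A)) :
    ∃ c, ‖c‖ = r b ∧ 0 ≤ ⟪c, x - b⟫ ∧ Disjoint (ball (b + c) ‖c‖) A := by
  have hxb : x - b ≠ 0 := sub_ne_zero.2 (hb.1.ne_of_notMem hx).symm
  set ζ := ‖x - b‖⁻¹ • (x - b)
  have hζ : ‖ζ‖ = 1 := norm_smul_inv_norm hxb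
  have hcone : ζ ∈ proxNormalCone A b := smul_mem_proxNormalCone (inv_nonneg.2 (norm_nonneg _))
    (mem_proxNormalCone_of_disjoint_ball (disjoint_ball_sub_of_mem_projSet hb))
  have hnorm : ‖r b • ζ‖ = r b := by rw [norm_smul, hζ, Real.norm_of_nonneg hrb, mul_one]
  refine ⟨r b • ζ, hnorm, ?_, ?_⟩
  · rw [real_inner_smul_left, real_inner_smul_left, real_inner_self_eq_norm_sq]
    positivity
  · rw [hnorm]
    exact Set.disjoint_iff_inter_eq_empty.2 ((hext b hbA).2 hbi ζ hζ hcone)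

/-- `q` is where the segment from an interior point `p` near `b` to `x` leaves `interior A`;
the exterior ball at `q` misses `p`, which lies behind `q` as seen from `x`. -/
theorem exists_disjoint_ball_near (hA : IsClosed A) (hrpos : ∀ a ∈ frontier A, 0 < r a)
    (hext : ExtExtSphere A r) (hx : x ∉ A) (hb : b ∈ projSet A x)
    (hbi : b ∈ frontier (interior A)) {ε : ℝ} (hε : 0 < ε) :
    ∃ p q ξ, dist p b < ε ∧ dist p q < ε ∧ q ∈ frontier A ∧ ‖ξ‖ = 1 ∧
      Disjoint (ball (q + r q • ξ) (r q)) A ∧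
      -(‖p - q‖ * ‖x - p‖) ≤ 2 * ⟪r q • ξ, x - p⟫ := by
  obtain ⟨p, hp, hpb⟩ := Metric.mem_closure_iff.1 (frontier_subset_closure hbi) ε hε
  obtain ⟨q, hqs, hq⟩ := (convex_segment p x).isPreconnected.exists_mem_frontier_of_isOpen
    isOpen_interior ⟨p, left_mem_segment ℝ p x, hp⟩
    fun h => hx (interior_subset (h (right_mem_segment ℝ p x)))
  have hqA : q ∈ A :=
    hA.closure_subset (closure_mono interior_subset (frontier_subset_closure hq))
  have hpq : p ≠ q := by
    rintro rfl
    exact hq.2 (by rwa [interior_interior])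
  have hqfr : q ∈ frontier A := frontier_interior_subset hq
  obtain ⟨ξ, hξ, -, hball⟩ := (hext q hqfr).1 hq
  have hdisj := Set.disjoint_iff_inter_eq_empty.2 hball
  have hnorm : ‖r q • ξ‖ = r q := by
    rw [norm_smul, hξ, Real.norm_of_nonneg (hrpos q hqfr).le, mul_one]
  refine ⟨p, q, ξ, by rwa [dist_comm], ?_, hqfr, hξ, hdisj, ?_⟩
  · have hseg := dist_add_dist_of_mem_segment hqs
    have hqx : dist x b ≤ dist q x := by
      rw [hb.2, dist_comm]
      exact infDist_le_dist_of_mem hqA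
    linarith [dist_triangle p b x, dist_comm b x, dist_comm p b]
  · have hdisj' : Disjoint (ball (q + r q • ξ) ‖r q • ξ‖) A := by rwa [hnorm]
    exact neg_mul_le_inner_of_mem_segment hpq hqs
      (hdisj'.notMem_of_mem_right (interior_subset hp))

theorem exists_disjoint_ball_of_mem_frontier_interior (hA : IsClosed A)
    (hrpos : ∀ a ∈ frontier A, 0 < r a) (hrcont : ContinuousOn r (frontier A))
    (hext : ExtExtSphere A r) (hx : x ∉ A) (hb : b ∈ projSet A x)
    (hbi : b ∈ frontier (interior A)) :
    ∃ c, ‖c‖ = r b ∧ 0 ≤ ⟪c, x - b⟫ ∧ Disjoint (ball (b + c) ‖c‖) A := by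
  choose p q ξ hpb hpq hqfr hξ hdisj hineq using fun k : ℕ =>
    exists_disjoint_ball_near hA hrpos hext hx hb hbi (Nat.one_div_pos_of_nat (n := k))
  have hε : Tendsto (fun k : ℕ => 1 / ((k : ℝ) + 1)) atTop (𝓝 0) :=
    tendsto_one_div_add_atTop_nhds_zero_nat
  have hp : Tendsto p atTop (𝓝 b) := tendsto_iff_dist_tendsto_zero.2
    (squeeze_zero (fun _ => dist_nonneg) (fun k => (hpb k).le) hε)
  have hq : Tendsto q atTop (𝓝 b) := tendsto_of_tendsto_of_dist hp
    (squeeze_zero (fun _ => dist_nonneg) (fun k => (hpq k).le) hε)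
  have hbA : b ∈ frontier A := frontier_interior_subset hbi
  have hr : Tendsto (fun k => r (q k)) atTop (𝓝 (r b)) :=
    (hrcont b hbA).tendsto.comp (tendsto_nhdsWithin_iff.2 ⟨hq, Eventually.of_forall hqfr⟩)
  exact exists_disjoint_ball_of_tendsto (hrpos b hbA).le hp hq hr hξ hdisj hineq

theorem exists_disjoint_ball_of_mem_projSet (hA : IsClosed A)
    (hrpos : ∀ a ∈ frontier A, 0 < r a) (hrcont : ContinuousOn r (frontier A))
    (hext : ExtExtSphere A r) (hx : x ∉ A) (hb : b ∈ projSet A x) :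
    ∃ c, ‖c‖ = r b ∧ 0 ≤ ⟪c, x - b⟫ ∧ Disjoint (ball (b + c) ‖c‖) A := by
  have hbA := projSet_subset_frontier hA hx hb
  by_cases hbi : b ∈ frontier (interior A)
  · exact exists_disjoint_ball_of_mem_frontier_interior hA hrpos hrcont hext hx hb hbi
  · exact exists_disjoint_ball_of_notMem_frontier_interior hext (hrpos b hbA).le hx hb hbA hbi

end EuclideanSpace

theorem stmt_19 {n : ℕ} (A : Set (EuclideanSpace ℝ (Fin n))) (hA : A.Nonempty)
    (hAc : IsClosed A) (r : EuclideanSpace ℝ (Fin n) → ℝ)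
    (hrpos : ∀ a ∈ frontier A, 0 < r a) (hrcont : ContinuousOn r (frontier A))
    (hext : ExtExtSphere A r) (ρ : EuclideanSpace ℝ (Fin n) → ℝ)
    (hρ : ∀ x, ρ x = sInf ((fun a => r a / 2) '' projSet A x)) :
    ∀ x ∉ A, ∃ y ∉ A, x ∈ Metric.closedBall y (ρ x) ∧
      Metric.closedBall y (ρ x) ⊆ Aᶜ := by
  intro x hx
  obtain ⟨b, hbA, hbx⟩ := hAc.exists_infDist_eq_dist hA x
  have hb : b ∈ projSet A x := ⟨hbA, hbx.symm⟩
  have hfr := projSet_subset_frontier hAc hx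
  have hlower : 0 ∈ lowerBounds ((fun a => r a / 2) '' projSet A x) := by
    rintro _ ⟨a, ha, rfl⟩
    exact (half_pos (hrpos a (hfr ha))).le
  have hρb : ρ x ≤ r b / 2 := hρ x ▸ csInf_le ⟨0, hlower⟩ ⟨b, hb, rfl⟩
  have hρ0 : 0 ≤ ρ x := hρ x ▸ le_csInf ⟨_, b, hb, rfl⟩ hlower
  obtain ⟨c, hc, hcx, hcA⟩ :=
    exists_disjoint_ball_of_mem_projSet hAc hrpos hrcont hext hx hb
  obtain ⟨y, hxy, hyA⟩ :=
    exists_closedBall_of_disjoint_balls (sub_ne_zero.2 (hbA.ne_of_notMem hx).symm)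
      (by rwa [real_inner_comm]) hρ0 (by linarith) (disjoint_ball_sub_of_mem_projSet hb) hcA
  rw [add_sub_cancel] at hxy
  exact ⟨y, hyA.notMem_of_mem_left (mem_closedBall_self hρ0), hxy, hyA.subset_compl_right⟩
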